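/- Let w be a permutation of the positive integers with only finitely many non-fixed points, let D be a pipe dream of w, and suppose a ladder move of order k ≥ 0 at (i,j) is applicable to D. Then D' = (D ∖ {(i,j)}) ∪ {(i−k−1,j+1)} is also a pipe dream of w. -/

import Mathlib

/-- The simple transposition corresponding to the cell `(i, j)`, namely
`s_{i+j-1}`, swapping `i+j-1` and `i+j` (as a permutation of the positive integers). -/
def cellTrans (p : ℕ+ × ℕ+) : Equiv.Perm ℕ+ :=
  Equiv.swap (p.1 + p.2 - 1) (p.1 + p.2)

/-- Key used to order cells: rows increasing, and within a row, columns decreasing. -/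
def cellKey (p : ℕ+ × ℕ+) : Lex (ℕ+ × ℕ+ᵒᵈ) :=
  toLex (p.1, OrderDual.toDual p.2)

/-- The product of the simple transpositions `s_{i+j-1}` over the cells `(i,j)` of `D`,
taken with `i` increasing and, for fixed `i`, `j` decreasing. -/
def pdWord (D : Finset (ℕ+ × ℕ+)) : Equiv.Perm ℕ+ :=
  (((D.image cellKey).sort (· ≤ ·)).map
    (fun q => cellTrans ((ofLex q).1, OrderDual.ofDual (ofLex q).2))).prod

/-- The number of inversions of a permutation of the positive integers. -/
noncomputable def invNum (w : Equiv.Perm ℕ+) : ℕ :=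
  Set.ncard {p : ℕ+ × ℕ+ | p.1 < p.2 ∧ w p.2 < w p.1}

/-- `D` is a pipe dream (RC-graph) of `w`. -/
def IsPipeDream (w : Equiv.Perm ℕ+) (D : Finset (ℕ+ × ℕ+)) : Prop :=
  D.card = invNum w ∧ pdWord D = w

/-- The number of pipe dreams of `w`. -/
noncomputable def nu (w : Equiv.Perm ℕ+) : ℕ :=
  Set.ncard {D : Finset (ℕ+ × ℕ+) | IsPipeDream w D}

/-- The number of occurrences of the pattern 132 in `w`. -/
noncomputable def p132 (w : Equiv.Perm ℕ+) : ℕ :=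
  Set.ncard {t : ℕ+ × ℕ+ × ℕ+ |
    t.1 < t.2.1 ∧ t.2.1 < t.2.2 ∧ w t.1 < w t.2.2 ∧ w t.2.2 < w t.2.1}

/-- The number of occurrences of the pattern 1432 in `w`. -/
noncomputable def p1432 (w : Equiv.Perm ℕ+) : ℕ :=
  Set.ncard {t : ℕ+ × ℕ+ × ℕ+ × ℕ+ |
    t.1 < t.2.1 ∧ t.2.1 < t.2.2.1 ∧ t.2.2.1 < t.2.2.2 ∧
    w t.1 < w t.2.2.2 ∧ w t.2.2.2 < w t.2.2.1 ∧ w t.2.2.1 < w t.2.1}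

/-- `w` avoids the pattern 1432. -/
def Avoids1432 (w : Equiv.Perm ℕ+) : Prop :=
  ¬ ∃ a b c d : ℕ+, a < b ∧ b < c ∧ c < d ∧ w a < w d ∧ w d < w c ∧ w c < w b

/-- The Rothe diagram of `w`. -/
def RD (w : Equiv.Perm ℕ+) : Set (ℕ+ × ℕ+) :=
  {p | p.2 < w p.1 ∧ p.1 < w⁻¹ p.2}

/-- The Lehmer code of `w`: `code(w)_i = #{j > i : w(j) < w(i)}`. -/
noncomputable def lehmer (w : Equiv.Perm ℕ+) (i : ℕ+) : ℕ :=
  Set.ncard {j : ℕ+ | i < j ∧ w j < w i}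

/-- The bottom pipe dream `B_w = {(i,j) : 1 ≤ j ≤ code(w)_i}` (as a set of cells). -/
def bottomSet (w : Equiv.Perm ℕ+) : Set (ℕ+ × ℕ+) :=
  {p | (p.2 : ℕ) ≤ lehmer w p.1}

/-- The top pipe dream `T_w = {(i,j) : 1 ≤ i ≤ code(w⁻¹)_j}` (as a set of cells). -/
def topSet (w : Equiv.Perm ℕ+) : Set (ℕ+ × ℕ+) :=
  {p | (p.1 : ℕ) ≤ lehmer w⁻¹ p.2}

/-- `α(S)_m`: the number of cells of `S` on the diagonal `{(i,j) : i + j - 1 = m}`. -/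
noncomputable def diagCount (S : Set (ℕ+ × ℕ+)) : ℕ+ → ℕ :=
  fun m => Set.ncard {p | p ∈ S ∧ p.1 + p.2 = m + 1}

/-- Ladder move of order `k` taking `D` to `D'`: writing `i = i₀ + k + 1` (so `i₀ = i - k - 1`
and automatically `i ≥ k + 2`), it requires `(i,j) ∈ D`, `(i,j+1) ∉ D`, `(i₀,j) ∉ D`,
`(i₀,j+1) ∉ D`, and `(i',j), (i',j+1) ∈ D` for all `i - k ≤ i' < i`; it removes `(i,j)` and
adds `(i₀, j+1)`. -/
def LadderMove (k : ℕ) (D D' : Finset (ℕ+ × ℕ+)) : Prop :=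
  ∃ i₀ j : ℕ+,
    (i₀ + k.succPNat, j) ∈ D ∧
    (i₀ + k.succPNat, j + 1) ∉ D ∧
    (i₀, j) ∉ D ∧
    (i₀, j + 1) ∉ D ∧
    (∀ i' : ℕ+, i₀ < i' → i' < i₀ + k.succPNat → (i', j) ∈ D ∧ (i', j + 1) ∈ D) ∧
    D' = insert (i₀, j + 1) (D.erase (i₀ + k.succPNat, j))

/-!
Put `n = i₀ + j`. In the reading word of `D`, the rungs of the ladder contribute
`s_{n+t} s_{n+t-1}` (row `i₀ + t`, `1 ≤ t ≤ k`) and its foot `(i₀+k+1, j)` contributes `s_{n+k}`;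
every other cell read between two consecutive rungs lies in a row's tail or head far enough from
column `j` to commute with the transposition being moved past it. By the braid relation
`s_n s_{n+1} s_n = s_{n+1} s_n s_{n+1}`, a letter `s_n` placed just above the ladder therefore
slides down one rung at a time, becoming `s_{n+1}`, …, and finally cancels the foot. The new cell
`(i₀, j+1)` contributes exactly this `s_n`, so the word is unchanged; one cell is removed and one
new cell is added, so the size is unchanged too.
-/

open Set

/-- The simple transposition `s_n`. -/
def simpleSwap (n : ℕ+) : Equiv.Perm ℕ+ :=
  Equiv.swap n (n + 1)

lemma cellTrans_add_one_right (a b : ℕ+) : cellTrans (a, b + 1) = simpleSwap (a + b) := by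
  have h : a + (b + 1) - 1 = a + b := by rw [← add_assoc, PNat.add_sub]
  simp only [cellTrans, simpleSwap, h, add_assoc]

lemma cellTrans_add_one_left (a b : ℕ+) : cellTrans (a + 1, b) = simpleSwap (a + b) := by
  have h : a + b + 1 - 1 = a + b := PNat.add_sub
  simp only [cellTrans, simpleSwap, add_right_comm a 1 b, h]

lemma simpleSwap_braid (n : ℕ+) :
    simpleSwap n * simpleSwap (n + 1) * simpleSwap n =
      simpleSwap (n + 1) * simpleSwap n * simpleSwap (n + 1) := by
  have h₁ := PNat.lt_add_right n 1
  have h₂ := PNat.lt_add_right (n + 1) 1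
  simp only [simpleSwap]
  rw [Equiv.swap_mul_swap_mul_swap h₁.ne (h₁.trans h₂).ne, Equiv.swap_comm (n + 1) (n + 1 + 1),
    Equiv.swap_comm n, Equiv.swap_mul_swap_mul_swap h₂.ne' (h₁.trans h₂).ne', Equiv.swap_comm]

lemma cellKey_lt_cellKey {p q : ℕ+ × ℕ+} :
    cellKey p < cellKey q ↔ p.1 < q.1 ∨ p.1 = q.1 ∧ q.2 < p.2 :=
  Prod.Lex.lt_iff

lemma cellKey_injective : Function.Injective cellKey := fun p q h => by
  simpa [cellKey, Prod.ext_iff] using h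

lemma cellKey_surjective : Function.Surjective cellKey := fun x =>
  ⟨((ofLex x).1, OrderDual.ofDual (ofLex x).2), rfl⟩

lemma cellKey_lt_of_fst_lt {i i' j j' : ℕ+} (h : i < i') : cellKey (i, j) < cellKey (i', j') :=
  cellKey_lt_cellKey.2 (Or.inl h)

lemma cellKey_add_one_lt (i j : ℕ+) : cellKey (i, j + 1) < cellKey (i, j) :=
  cellKey_lt_cellKey.2 (Or.inr ⟨rfl, PNat.lt_add_right j 1⟩)

lemma Ioi_cellKey_add_one (i j : ℕ+) :
    Ioi (cellKey (i, j + 1)) = insert (cellKey (i, j)) (Ioi (cellKey (i, j))) := by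
  ext x
  obtain ⟨⟨a, b⟩, rfl⟩ := cellKey_surjective x
  simp only [mem_Ioi, mem_insert_iff, cellKey_lt_cellKey, cellKey_injective.eq_iff, Prod.ext_iff]
  pnat_to_nat
  omega

lemma simpleSwap_commute_cellTrans {i j : ℕ+} {p : ℕ+ × ℕ+}
    (hp : cellKey p ∈ Ioo (cellKey (i, j)) (cellKey (i + 1, j + 1))) :
    Commute (simpleSwap (i + j)) (cellTrans p) := by
  obtain ⟨a, b⟩ := p
  obtain ⟨h₁, h₂⟩ := hp
  rw [cellKey_lt_cellKey] at h₁ h₂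
  dsimp only at h₁ h₂
  refine (Equiv.Perm.disjoint_swap_swap ?_).commute
  simp only [List.nodup_cons, List.mem_cons, List.not_mem_nil, List.nodup_nil, or_false,
    not_or, not_false_eq_true, and_true]
  pnat_to_nat
  omega

lemma Finset.sort_union_of_forall_lt {α : Type*} [LinearOrder α] {s t : Finset α}
    (h : ∀ a ∈ s, ∀ b ∈ t, a < b) :
    (s ∪ t).sort (· ≤ ·) = s.sort (· ≤ ·) ++ t.sort (· ≤ ·) := by
  have hst : Disjoint s t := Finset.disjoint_left.2 fun a ha hat => (h a ha a hat).false
  refine List.Perm.eq_of_pairwise' (Finset.pairwise_sort _ _) ?_ ?_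
  · refine List.pairwise_append.2 ⟨Finset.pairwise_sort _ _, Finset.pairwise_sort _ _, ?_⟩
    intro a ha b hb
    exact (h a ((Finset.mem_sort _).1 ha) b ((Finset.mem_sort _).1 hb)).le
  · rw [← Multiset.coe_eq_coe, ← Multiset.coe_add, Finset.sort_eq, Finset.sort_eq,
      Finset.sort_eq, ← Finset.disjUnion_eq_union s t hst]
    rfl

lemma pdWord_union {A B : Finset (ℕ+ × ℕ+)} (h : ∀ a ∈ A, ∀ b ∈ B, cellKey a < cellKey b) :
    pdWord (A ∪ B) = pdWord A * pdWord B := by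
  rw [pdWord, Finset.image_union, Finset.sort_union_of_forall_lt, List.map_append,
    List.prod_append]
  · rfl
  simp only [Finset.mem_image]
  rintro _ ⟨a, ha, rfl⟩ _ ⟨b, hb, rfl⟩
  exact h a ha b hb

lemma pdWord_singleton (p : ℕ+ × ℕ+) : pdWord {p} = cellTrans p := by
  simp [pdWord, cellKey]

lemma commute_pdWord {σ : Equiv.Perm ℕ+} {A : Finset (ℕ+ × ℕ+)}
    (h : ∀ p ∈ A, Commute σ (cellTrans p)) : Commute σ (pdWord A) := by
  refine Commute.list_prod_right _ _ fun x hx => ?_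
  simp only [List.mem_map, Finset.mem_sort, Finset.mem_image] at hx
  obtain ⟨_, ⟨p, hp, rfl⟩, rfl⟩ := hx
  exact h p hp

open Classical in
noncomputable def cellsIn (s : Set (Lex (ℕ+ × ℕ+ᵒᵈ))) (D : Finset (ℕ+ × ℕ+)) :
    Finset (ℕ+ × ℕ+) :=
  D.filter fun p => cellKey p ∈ s

section cellsIn

variable {s t : Set (Lex (ℕ+ × ℕ+ᵒᵈ))} {p : ℕ+ × ℕ+} (D : Finset (ℕ+ × ℕ+))

lemma mem_cellsIn : p ∈ cellsIn s D ↔ p ∈ D ∧ cellKey p ∈ s := by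
  classical
  simp only [cellsIn, Finset.mem_filter]

lemma cellsIn_univ : cellsIn univ D = D := by
  ext q
  simp [mem_cellsIn]

lemma cellsIn_union : cellsIn (s ∪ t) D = cellsIn s D ∪ cellsIn t D := by
  ext q
  simp only [mem_cellsIn, Finset.mem_union, mem_union, and_or_left]

lemma cellsIn_insert_of_notMem (h : cellKey p ∉ s) : cellsIn s (insert p D) = cellsIn s D := by
  ext q
  simp only [mem_cellsIn, Finset.mem_insert]
  grind

lemma cellsIn_erase_of_notMem (h : cellKey p ∉ s) : cellsIn s (D.erase p) = cellsIn s D := by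
  ext q
  simp only [mem_cellsIn, Finset.mem_erase]
  grind

lemma pdWord_cellsIn_union (h : ∀ a ∈ s, ∀ b ∈ t, a < b) :
    pdWord (cellsIn (s ∪ t) D) = pdWord (cellsIn s D) * pdWord (cellsIn t D) := by
  refine (congrArg pdWord (cellsIn_union D)).trans (pdWord_union ?_)
  simp only [mem_cellsIn]
  exact fun a ha b hb => h _ ha.2 _ hb.2

lemma pdWord_cellsIn_singleton :
    pdWord (cellsIn {cellKey p} D) = if p ∈ D then cellTrans p else 1 := by
  have hmem (q) : q ∈ cellsIn {cellKey p} D ↔ q = p ∧ p ∈ D := by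
    simp only [mem_cellsIn, mem_singleton_iff, cellKey_injective.eq_iff]
    grind
  split_ifs with hp
  · rw [show cellsIn {cellKey p} D = {p} by ext q; simp [hmem, hp], pdWord_singleton]
  · rw [show cellsIn {cellKey p} D = ∅ by ext q; simp [hmem, hp]]
    simp [pdWord]

end cellsIn

section ladder

variable (D : Finset (ℕ+ × ℕ+))

lemma pdWord_cellsIn_union_Ici {s : Set (Lex (ℕ+ × ℕ+ᵒᵈ))} (i j : ℕ+)
    (hs : ∀ a ∈ s, a < cellKey (i, j + 1)) :
    pdWord (cellsIn (s ∪ Ici (cellKey (i, j + 1))) D) =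
      pdWord (cellsIn s D) * ((if (i, j + 1) ∈ D then simpleSwap (i + j) else 1) *
        ((if (i, j) ∈ D then cellTrans (i, j) else 1) *
          pdWord (cellsIn (Ioi (cellKey (i, j))) D))) := by
  have hlt := cellKey_add_one_lt i j
  rw [← Ioi_insert, Ioi_cellKey_add_one, insert_eq, insert_eq, pdWord_cellsIn_union,
    pdWord_cellsIn_union, pdWord_cellsIn_union, pdWord_cellsIn_singleton,
    pdWord_cellsIn_singleton, cellTrans_add_one_right]
  all_goals
    simp only [mem_union, mem_singleton_iff, mem_Ioi]
    grind

lemma pdWord_cellsIn_Ioi_eq (i j : ℕ+) :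
    pdWord (cellsIn (Ioi (cellKey (i, j))) D) =
      pdWord (cellsIn (Ioo (cellKey (i, j)) (cellKey (i + 1, j + 1))) D) *
        ((if (i + 1, j + 1) ∈ D then simpleSwap (i + j + 1) else 1) *
          ((if (i + 1, j) ∈ D then simpleSwap (i + j) else 1) *
            pdWord (cellsIn (Ioi (cellKey (i + 1, j))) D))) := by
  rw [← Ioo_union_Ici_eq_Ioi (cellKey_lt_of_fst_lt (PNat.lt_add_right i 1)),
    pdWord_cellsIn_union_Ici D (i + 1) j (fun _ h => h.2), cellTrans_add_one_left,
    add_right_comm i 1 j]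

lemma commute_simpleSwap_pdWord_cellsIn_Ioo (i j : ℕ+) :
    Commute (simpleSwap (i + j))
      (pdWord (cellsIn (Ioo (cellKey (i, j)) (cellKey (i + 1, j + 1))) D)) :=
  commute_pdWord fun _ hp => simpleSwap_commute_cellTrans ((mem_cellsIn D).1 hp).2

theorem simpleSwap_mul_pdWord_cellsIn_Ioi_of_ladder (k : ℕ) (i j : ℕ+)
    (hmem : (i + k.succPNat, j) ∈ D) (hnot : (i + k.succPNat, j + 1) ∉ D)
    (hmid : ∀ i', i < i' → i' < i + k.succPNat → (i', j) ∈ D ∧ (i', j + 1) ∈ D) :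
    simpleSwap (i + j) * pdWord (cellsIn (Ioi (cellKey (i, j))) D) =
      pdWord (cellsIn (Ioi (cellKey (i, j))) (D.erase (i + k.succPNat, j))) := by
  induction k generalizing i with
  | zero =>
    change (i + 1, j) ∈ D at hmem
    change (i + 1, j + 1) ∉ D at hnot
    change _ = pdWord (cellsIn _ (D.erase (i + 1, j)))
    rw [pdWord_cellsIn_Ioi_eq D i j, pdWord_cellsIn_Ioi_eq _ i j,
      cellsIn_erase_of_notMem (s := Ioo _ _) _ fun h => lt_asymm (cellKey_add_one_lt _ _) h.2,
      cellsIn_erase_of_notMem (s := Ioi _) _ (lt_irrefl (cellKey (i + 1, j)))]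
    simp only [hmem, hnot, Finset.mem_erase, ne_eq, not_true_eq_false, false_and, and_false,
      if_true, if_false, one_mul]
    rw [(commute_simpleSwap_pdWord_cellsIn_Ioo D i j).left_comm, simpleSwap,
      Equiv.swap_mul_self_mul]
  | succ k ih =>
    have hK : i + (k + 1).succPNat = i + 1 + k.succPNat := by
      pnat_to_nat
      simp only [Nat.succPNat_coe]
      omega
    rw [hK] at hmem hnot hmid ⊢
    have hi := PNat.lt_add_right i 1
    have hiK := PNat.lt_add_right (i + 1) k.succPNat
    obtain ⟨h₁, h₂⟩ := hmid (i + 1) hi hiK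
    have IH := ih (i + 1) hmem hnot (fun i' h h' => hmid i' (hi.trans h) h')
    rw [add_right_comm i 1 j] at IH
    rw [pdWord_cellsIn_Ioi_eq D i j, pdWord_cellsIn_Ioi_eq _ i j,
      cellsIn_erase_of_notMem (s := Ioo _ _) _ fun h => lt_asymm (cellKey_lt_of_fst_lt hiK) h.2,
      ← IH]
    simp only [h₁, h₂, Finset.mem_erase, ne_eq, Prod.mk.injEq, hiK.ne, false_and,
      not_false_eq_true, and_self, if_true]
    rw [(commute_simpleSwap_pdWord_cellsIn_Ioo D i j).left_comm]
    simp only [← mul_assoc, simpleSwap_braid]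

end ladder

theorem ladder_move_preserves_pipe_dream_general (w : Equiv.Perm ℕ+)
    (D D' : Finset (ℕ+ × ℕ+)) (hD : IsPipeDream w D) (k : ℕ)
    (h : LadderMove k D D') : IsPipeDream w D' := by
  obtain ⟨i, j, hmem, hnot, h₀, h₁, hmid, rfl⟩ := h
  obtain ⟨hcard, rfl⟩ := hD
  refine ⟨?_, ?_⟩
  · rw [Finset.card_insert_of_notMem fun h => h₁ (Finset.mem_of_mem_erase h),
      Finset.card_erase_add_one hmem, hcard]
  have hcut (X : Finset (ℕ+ × ℕ+)) := pdWord_cellsIn_union_Ici X i j (s := Iio _) fun _ h => h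
  simp only [Iio_union_Ici, cellsIn_univ] at hcut
  rw [hcut D, hcut (insert _ _),
    cellsIn_insert_of_notMem (s := Iio _) _ (lt_irrefl (cellKey (i, j + 1))),
    cellsIn_erase_of_notMem (s := Iio _) _
      (lt_asymm (cellKey_lt_of_fst_lt (PNat.lt_add_right i k.succPNat))),
    cellsIn_insert_of_notMem (s := Ioi _) _ (lt_asymm (cellKey_add_one_lt i j)),
    ← simpleSwap_mul_pdWord_cellsIn_Ioi_of_ladder D k i j hmem hnot hmid]
  simp [h₀, h₁, (PNat.lt_add_right j 1).ne, simpleSwap]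

/-- a ladder move applied to a pipe dream of `w` yields a pipe dream of `w`. -/
theorem ladder_move_preserves_pipe_dream (w : Equiv.Perm ℕ+)
    (hw : {x : ℕ+ | w x ≠ x}.Finite)
    (D D' : Finset (ℕ+ × ℕ+)) (hD : IsPipeDream w D) (k : ℕ)
    (h : LadderMove k D D') : IsPipeDream w D' :=
  ladder_move_preserves_pipe_dream_general w D D' hD k h
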